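/- Let {K_i : i ∈ I} be a family of convex cones in a Banach space X with the closed intersection property. Then the normality constant λ_N(K_i : i ∈ I) := sup{η ≥ 0 : ⋂_i (K_i + η·B_X) ⊆ (⋂_i K_i) + B_X} equals the dual normality constant λ_D(K_i° : i ∈ I) := sup{η ≥ 0 : B_{X*} # cl^{w*}co(⋃_i K_i°) ⊆ cl^{w*}co(⋃_i (K_i° # (1/η)·B_{X*}))}. -/

import Mathlib

open Set Metric
open scoped Pointwise

noncomputable section

/-- The recession cone `0⁺A = {x | A + t • x ⊆ A for all t ≥ 0}`. -/
def recCone {X : Type*} [AddCommGroup X] [Module ℝ X] (A : Set X) : Set X :=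
  {x | ∀ t : ℝ, 0 ≤ t → ∀ a ∈ A, a + t • x ∈ A}

/-- The inverse sum `B₁ # B₂`. -/
def invSum {X : Type*} [AddCommGroup X] [Module ℝ X] (B₁ B₂ : Set X) : Set X :=
  (⋃ t ∈ Set.Ioo (0:ℝ) 1, (t • B₁ ∩ (1 - t) • B₂)) ∪ (B₁ ∩ recCone B₂) ∪ (B₂ ∩ recCone B₁)

/-- The polar `A° = {x* | ⟨x*, x⟩ ≤ 1 ∀ x ∈ A}` of a set in `X`, a subset of the dual. -/
def pol {X : Type*} [NormedAddCommGroup X] [NormedSpace ℝ X] (A : Set X) :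
    Set (X →L[ℝ] ℝ) := {f | ∀ x ∈ A, f x ≤ 1}

/-- The dual cone (negative polar) `A^⊖ = {x* | ⟨x*, x⟩ ≤ 0 ∀ x ∈ A}`. -/
def dCone {X : Type*} [NormedAddCommGroup X] [NormedSpace ℝ X] (A : Set X) :
    Set (X →L[ℝ] ℝ) := {f | ∀ x ∈ A, f x ≤ 0}

/-- The weak* closure of a set of continuous linear functionals. -/
def wcl {X : Type*} [NormedAddCommGroup X] [NormedSpace ℝ X]
    (S : Set (X →L[ℝ] ℝ)) : Set (X →L[ℝ] ℝ) :=
  {f | StrongDual.toWeakDual (𝕜 := ℝ) (E := X) f ∈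
    closure (StrongDual.toWeakDual (𝕜 := ℝ) (E := X) '' S)}

/-- The set of all finite sums `Σ_{i ∈ I₀} x_i` with `x_i ∈ P i`, `I₀ ⊆ I` finite. -/
def finSums {X : Type*} [NormedAddCommGroup X] [NormedSpace ℝ X] {I : Type*}
    (P : I → Set (X →L[ℝ] ℝ)) : Set (X →L[ℝ] ℝ) :=
  {g | ∃ (s : Finset I) (x : I → (X →L[ℝ] ℝ)), (∀ i ∈ s, x i ∈ P i) ∧ g = ∑ i ∈ s, x i}

/-- The extended Jameson property `(G_η)`: every `f` in the weak* closure of the set of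
finite sums of the `P i` is a weak* limit (i.e. lies in the weak* closure) of finite sums
`Σ_{i ∈ s} x_i`, `x_i ∈ P i`, with `Σ_{i ∈ s} ‖x_i‖ ≤ (1/η) ‖f‖`. -/
def propG {X : Type*} [NormedAddCommGroup X] [NormedSpace ℝ X] {I : Type*}
    (P : I → Set (X →L[ℝ] ℝ)) (η : ℝ) : Prop :=
  ∀ f ∈ wcl (finSums P),
    f ∈ wcl {g | ∃ (s : Finset I) (x : I → (X →L[ℝ] ℝ)),
      (∀ i ∈ s, x i ∈ P i) ∧ g = ∑ i ∈ s, x i ∧ ∑ i ∈ s, ‖x i‖ ≤ (1 / η) * ‖f‖}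

/-- The normal cone `N(C, x) = {x* | ⟨x*, c − x⟩ ≤ 0 ∀ c ∈ C}`. -/
def ncone {X : Type*} [NormedAddCommGroup X] [NormedSpace ℝ X] (C : Set X) (x : X) :
    Set (X →L[ℝ] ℝ) := {f | ∀ c ∈ C, f (c - x) ≤ 0}

/-- The conical hull of a convex set `S`: `cone S = {t • s | t ≥ 0, s ∈ S}`. -/
def coneHull {X : Type*} [AddCommGroup X] [Module ℝ X] (S : Set X) : Set X :=
  {y | ∃ t : ℝ, 0 ≤ t ∧ ∃ s ∈ S, y = t • s}

end

/-!
Both constants are suprema of sets containing `0`, and each `η` in one set puts every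
`η' ∈ [0, η)` into the other, so the suprema agree. The two transfers rest on one bipolar fact
about a convex cone `C`: since `(C + r B)° ⊆ C^⊖ ∩ r⁻¹ B*`, if `g x ≤ r` for all `g ∈ C^⊖` of
norm at most `1`, then `x ∈ C + s B` for every `s > r`. On the dual side, weak* separation tests
membership in a weak*-closed convex hull by vectors of `X`, and the closed intersection property
yields `(⋂ K_i)^⊖ ⊆ cl^{w*} co ⋃ K_i°`. Every inverse sum that occurs has a cone as one argument
and is therefore just an intersection.
-/

open StrongDual

lemma upperBounds_subset_of_forall_Ico_subset {S T : Set ℝ} (h0 : (0 : ℝ) ∈ S)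
    (h : ∀ η ∈ T, Ico 0 η ⊆ S) : upperBounds S ⊆ upperBounds T := by
  intro M hM η hη
  by_contra! hlt
  obtain ⟨c, hMc, hcη⟩ := exists_between hlt
  have hc : c ∈ S := h η hη ⟨(hM h0).trans hMc.le, hcη⟩
  exact (hM hc).not_gt hMc

lemma sSup_eq_of_forall_Ico_subset {S T : Set ℝ} (h0S : (0 : ℝ) ∈ S) (h0T : (0 : ℝ) ∈ T)
    (hST : ∀ η ∈ S, Ico 0 η ⊆ T) (hTS : ∀ η ∈ T, Ico 0 η ⊆ S) : sSup S = sSup T := by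
  have hub : upperBounds S = upperBounds T :=
    (upperBounds_subset_of_forall_Ico_subset h0S hTS).antisymm
      (upperBounds_subset_of_forall_Ico_subset h0T hST)
  by_cases hS : BddAbove S
  · have hT : BddAbove T := by rwa [BddAbove, ← hub]
    refine (isLUB_csSup ⟨0, h0S⟩ hS).unique ?_
    rw [IsLUB, hub]
    exact isLUB_csSup ⟨0, h0T⟩ hT
  · have hT : ¬BddAbove T := by rwa [BddAbove, ← hub]
    rw [Real.sSup_of_not_bddAbove hS, Real.sSup_of_not_bddAbove hT]

section Cone

variable {E : Type*} [AddCommGroup E] [Module ℝ E]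

lemma convex_of_smul_subset_of_add_subset {C : Set E} (hsmul : ∀ t : ℝ, 0 ≤ t → t • C ⊆ C)
    (hadd : C + C ⊆ C) : Convex ℝ C :=
  fun _ hx _ hy a b ha hb _ =>
    hadd (add_mem_add (hsmul a ha (smul_mem_smul_set hx)) (hsmul b hb (smul_mem_smul_set hy)))

lemma add_subset_of_convex_of_smul_subset {C : Set E} (hconv : Convex ℝ C)
    (hsmul : ∀ t : ℝ, 0 ≤ t → t • C ⊆ C) : C + C ⊆ C := by
  rintro _ ⟨x, hx, y, hy, rfl⟩
  have hmid : (2⁻¹ : ℝ) • x + (2⁻¹ : ℝ) • y ∈ C :=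
    hconv hx hy (by norm_num) (by norm_num) (by norm_num)
  have h2 := hsmul 2 zero_le_two (smul_mem_smul_set hmid)
  rwa [smul_add, smul_inv_smul₀ two_ne_zero, smul_inv_smul₀ two_ne_zero] at h2

lemma smul_convexHull_subset {S : Set E} (hS : ∀ t : ℝ, 0 ≤ t → t • S ⊆ S) {t : ℝ} (ht : 0 ≤ t) :
    t • convexHull ℝ S ⊆ convexHull ℝ S := by
  rw [← convexHull_smul]
  exact convexHull_mono (hS t ht)

lemma subset_recCone {C : Set E} (hsmul : ∀ t : ℝ, 0 ≤ t → t • C ⊆ C) (hadd : C + C ⊆ C) :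
    C ⊆ recCone C :=
  fun _ hx t ht _ ha => hadd (add_mem_add ha (hsmul t ht (smul_mem_smul_set hx)))

lemma recCone_subset {S : Set E} (h0 : (0 : E) ∈ S) : recCone S ⊆ S :=
  fun x hx => by simpa using hx 1 zero_le_one 0 h0

lemma recCone_univ : recCone (univ : Set E) = univ :=
  eq_univ_of_forall fun _ _ _ _ _ => mem_univ _

lemma invSum_subset_inter {B₁ B₂ : Set E} (h₁ : Convex ℝ B₁) (h₂ : Convex ℝ B₂)
    (h0₁ : (0 : E) ∈ B₁) (h0₂ : (0 : E) ∈ B₂) : invSum B₁ B₂ ⊆ B₁ ∩ B₂ := by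
  rintro x ((hx | ⟨hx₁, hx₂⟩) | ⟨hx₂, hx₁⟩)
  · obtain ⟨t, ⟨ht0, ht1⟩, ⟨y₁, hy₁, rfl⟩, y₂, hy₂, hxy⟩ := mem_iUnion₂.1 hx
    refine ⟨(h₁.starConvex h0₁).smul_mem hy₁ ht0.le ht1.le, ?_⟩
    rw [← hxy]
    exact (h₂.starConvex h0₂).smul_mem hy₂ (by linarith) (by linarith)
  · exact ⟨hx₁, recCone_subset h0₂ hx₂⟩
  · exact ⟨recCone_subset h0₁ hx₁, hx₂⟩

lemma invSum_eq_inter_of_subset_recCone_right {B₁ B₂ : Set E} (h₁ : Convex ℝ B₁)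
    (h₂ : Convex ℝ B₂) (h0₁ : (0 : E) ∈ B₁) (h0₂ : (0 : E) ∈ B₂) (hrec : B₂ ⊆ recCone B₂) :
    invSum B₁ B₂ = B₁ ∩ B₂ :=
  (invSum_subset_inter h₁ h₂ h0₁ h0₂).antisymm fun _ hx => Or.inl (Or.inr ⟨hx.1, hrec hx.2⟩)

lemma invSum_eq_inter_of_subset_recCone_left {B₁ B₂ : Set E} (h₁ : Convex ℝ B₁)
    (h₂ : Convex ℝ B₂) (h0₁ : (0 : E) ∈ B₁) (h0₂ : (0 : E) ∈ B₂) (hrec : B₁ ⊆ recCone B₁) :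
    invSum B₁ B₂ = B₁ ∩ B₂ :=
  (invSum_subset_inter h₁ h₂ h0₁ h0₂).antisymm fun _ hx => Or.inr ⟨hx.2, hrec hx.1⟩

lemma subset_invSum_univ (B : Set E) : B ⊆ invSum B univ :=
  fun _ hx => Or.inl (Or.inr ⟨hx, by simp [recCone_univ]⟩)

end Cone

lemma exists_forall_le_one_lt_of_notMem {E : Type*} [AddCommGroup E] [Module ℝ E]
    [TopologicalSpace E] [IsTopologicalAddGroup E] [ContinuousSMul ℝ E] [LocallyConvexSpace ℝ E]
    {S : Set E} (hconv : Convex ℝ S) (hclosed : IsClosed S) (h0 : (0 : E) ∈ S) {x : E}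
    (hx : x ∉ S) : ∃ f : StrongDual ℝ E, (∀ a ∈ S, f a ≤ 1) ∧ 1 < f x := by
  obtain ⟨f, u, hfS, hfx⟩ := geometric_hahn_banach_closed_point hconv hclosed hx
  have hu : 0 < u := by simpa using hfS 0 h0
  refine ⟨u⁻¹ • f, fun a ha => ?_, ?_⟩
  · rw [smul_apply, smul_eq_mul, inv_mul_le_iff₀ hu, mul_one]
    exact (hfS a ha).le
  · rwa [smul_apply, smul_eq_mul, lt_inv_mul_iff₀ hu, mul_one]

lemma closure_add_closedBall_subset {X : Type*} [NormedAddCommGroup X] {C : Set X} {r s : ℝ}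
    (hr : 0 ≤ r) (hrs : r < s) :
    closure (C + closedBall (0 : X) r) ⊆ C + closedBall (0 : X) s := by
  obtain ⟨c, hrc, hcs⟩ := exists_between hrs
  calc closure (C + closedBall (0 : X) r)
      ⊆ closure (thickening c C) := by
        rw [← add_ball_zero]
        exact closure_mono (add_subset_add_left (closedBall_subset_ball hrc))
    _ ⊆ cthickening c C := closure_thickening_subset_cthickening c C
    _ ⊆ thickening s C := cthickening_subset_thickening' (hr.trans_lt hrs) hcs C
    _ ⊆ C + closedBall (0 : X) s := by
        rw [← add_ball_zero]
        exact add_subset_add_left ball_subset_closedBall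

section Polar

variable {X : Type*} [NormedAddCommGroup X] [NormedSpace ℝ X]

lemma pol_eq_dCone {C : Set X} (hsmul : ∀ t : ℝ, 0 ≤ t → t • C ⊆ C) : pol C = dCone C := by
  refine Subset.antisymm (fun g hg x hx => ?_) fun g hg x hx => (hg x hx).trans zero_le_one
  by_contra! hpos
  have h := hg _ (hsmul (2 / g x) (by positivity) (smul_mem_smul_set hx))
  rw [map_smul, smul_eq_mul, div_mul_cancel₀ 2 hpos.ne'] at h
  norm_num at h

lemma zero_mem_pol (A : Set X) : (0 : X →L[ℝ] ℝ) ∈ pol A :=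
  fun _ _ => zero_le_one

lemma zero_mem_dCone (A : Set X) : (0 : X →L[ℝ] ℝ) ∈ dCone A :=
  fun _ _ => le_rfl

lemma smul_dCone_subset (A : Set X) {t : ℝ} (ht : 0 ≤ t) : t • dCone A ⊆ dCone A := by
  rintro _ ⟨g, hg, rfl⟩ x hx
  exact mul_nonpos_of_nonneg_of_nonpos ht (hg x hx)

lemma dCone_add_subset (A : Set X) : dCone A + dCone A ⊆ dCone A := by
  rintro _ ⟨f, hf, g, hg, rfl⟩ x hx
  exact add_nonpos (hf x hx) (hg x hx)

lemma apply_le_of_mem_closedBall {f : X →L[ℝ] ℝ} {r : ℝ} (hf : f ∈ closedBall 0 r) {b : X}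
    (hb : b ∈ closedBall (0 : X) 1) : f b ≤ r :=
  calc f b ≤ ‖f‖ * ‖b‖ := (le_abs_self _).trans (f.le_opNorm b)
    _ ≤ r * 1 := mul_le_mul (mem_closedBall_zero_iff.1 hf) (mem_closedBall_zero_iff.1 hb)
        (norm_nonneg _) ((norm_nonneg _).trans (mem_closedBall_zero_iff.1 hf))
    _ = r := mul_one r

lemma norm_le_of_forall_apply_le {f : X →L[ℝ] ℝ} {c : ℝ} (hc : 0 ≤ c)
    (h : ∀ b ∈ closedBall (0 : X) 1, f b ≤ c) : ‖f‖ ≤ c := by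
  refine f.opNorm_le_of_unit_norm hc fun b hb => abs_le.2 ⟨?_, h b (by simp [hb])⟩
  have := h (-b) (by simp [hb])
  rw [map_neg] at this
  linarith

lemma mem_closure_of_forall_mem_pol {A : Set X} (hconv : Convex ℝ A) (h0 : (0 : X) ∈ A) {x : X}
    (hx : ∀ g ∈ pol A, g x ≤ 1) : x ∈ closure A := by
  by_contra hxA
  obtain ⟨g, hgA, hgx⟩ := exists_forall_le_one_lt_of_notMem hconv.closure isClosed_closure
    (subset_closure h0) hxA
  exact (hx g fun a ha => hgA a (subset_closure ha)).not_gt hgx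

lemma smul_mem_dCone_of_mem_pol_add_closedBall {C : Set X} (hsmul : ∀ t : ℝ, 0 ≤ t → t • C ⊆ C)
    (h0 : (0 : X) ∈ C) {r : ℝ} (hr : 0 ≤ r) {g : X →L[ℝ] ℝ}
    (hg : g ∈ pol (C + closedBall (0 : X) r)) : r • g ∈ dCone C ∧ ‖r • g‖ ≤ 1 := by
  have hgC : g ∈ dCone C := by
    rw [← pol_eq_dCone hsmul]
    exact fun c hc => hg c (by simpa using add_mem_add hc (mem_closedBall_self (x := (0 : X)) hr))
  refine ⟨smul_dCone_subset C hr (smul_mem_smul_set hgC), norm_le_of_forall_apply_le zero_le_one ?_⟩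
  intro b hb
  have hrb : r • b ∈ closedBall (0 : X) r := by
    simpa [norm_smul, abs_of_nonneg hr] using
      mul_le_of_le_one_right hr (mem_closedBall_zero_iff.1 hb)
  simpa using hg _ (add_mem_add h0 hrb)

lemma mem_add_closedBall_of_forall_dCone {C : Set X} (hsmul : ∀ t : ℝ, 0 ≤ t → t • C ⊆ C)
    (hconv : Convex ℝ C) (h0 : (0 : X) ∈ C) {r s : ℝ} (hr : 0 ≤ r) (hrs : r < s) {x : X}
    (hx : ∀ g ∈ dCone C, ‖g‖ ≤ 1 → g x ≤ r) : x ∈ C + closedBall (0 : X) s := by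
  -- the room between `r` and `s` absorbs the closure coming from bipolarity
  obtain ⟨r', hrr', hr's⟩ := exists_between hrs
  have hr' : 0 < r' := hr.trans_lt hrr'
  refine closure_add_closedBall_subset hr'.le hr's (mem_closure_of_forall_mem_pol
    (hconv.add (convex_closedBall 0 r'))
    (by simpa using add_mem_add h0 (mem_closedBall_self hr'.le))
    fun g hg => ?_)
  obtain ⟨hgC, hgn⟩ := smul_mem_dCone_of_mem_pol_add_closedBall hsmul h0 hr'.le hg
  have hgx : r' * g x ≤ r := hx _ hgC hgn
  by_contra! hgx'
  nlinarith

lemma invSum_pol_smul_closedBall {C : Set X} (hsmul : ∀ t : ℝ, 0 ≤ t → t • C ⊆ C) {r : ℝ}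
    (hr : 0 ≤ r) :
    invSum (pol C) (r • closedBall (0 : X →L[ℝ] ℝ) 1) = dCone C ∩ closedBall 0 r := by
  rw [pol_eq_dCone hsmul, smul_unitClosedBall_of_nonneg hr]
  have hs : ∀ t : ℝ, 0 ≤ t → t • dCone C ⊆ dCone C := fun t ht => smul_dCone_subset C ht
  exact invSum_eq_inter_of_subset_recCone_left
    (convex_of_smul_subset_of_add_subset hs (dCone_add_subset C)) (convex_closedBall 0 r)
    (zero_mem_dCone C) (mem_closedBall_self hr) (subset_recCone hs (dCone_add_subset C))

end Polar

section WeakStar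

variable {X : Type*} [NormedAddCommGroup X] [NormedSpace ℝ X]

-- `WeakDual ℝ X` is a type synonym for a `WeakBilin`, whose instance is not found through it.
instance : LocallyConvexSpace ℝ (WeakDual ℝ X) := WeakBilin.locallyConvexSpace

lemma WeakDual.exists_eq_eval (φ : StrongDual ℝ (WeakDual ℝ X)) :
    ∃ x : X, ∀ g : WeakDual ℝ X, φ g = g x := by
  obtain ⟨x, hx⟩ := LinearMap.dualEmbedding_surjective (topDualPairing ℝ X) φ
  exact ⟨x, fun g => by rw [← hx]; rfl⟩

lemma mem_wcl_iff {S : Set (X →L[ℝ] ℝ)} {f : X →L[ℝ] ℝ} :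
    f ∈ wcl S ↔ toWeakDual f ∈ closure (toWeakDual '' S : Set (WeakDual ℝ X)) :=
  Iff.rfl

lemma subset_wcl (S : Set (X →L[ℝ] ℝ)) : S ⊆ wcl S :=
  fun _ hf => mem_wcl_iff.2 (subset_closure (mem_image_of_mem _ hf))

lemma wcl_mono {S T : Set (X →L[ℝ] ℝ)} (h : S ⊆ T) : wcl S ⊆ wcl T :=
  fun _ hf => mem_wcl_iff.2 (closure_mono (image_mono h) (mem_wcl_iff.1 hf))

lemma convex_wcl {S : Set (X →L[ℝ] ℝ)} (hS : Convex ℝ S) : Convex ℝ (wcl S) :=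
  let e : StrongDual ℝ X →ₗ[ℝ] WeakDual ℝ X := (toWeakDual : StrongDual ℝ X ≃ₗ[ℝ] _).toLinearMap
  (hS.linear_image e).closure.linear_preimage e

lemma smul_wcl_subset {S : Set (X →L[ℝ] ℝ)} {t : ℝ} (h : t • S ⊆ S) : t • wcl S ⊆ wcl S := by
  rintro _ ⟨f, hf, rfl⟩
  have hmaps :
      MapsTo (t • · : WeakDual ℝ X → WeakDual ℝ X) (toWeakDual '' S) (toWeakDual '' S) := by
    rintro _ ⟨g, hg, rfl⟩
    exact ⟨t • g, h (smul_mem_smul_set hg), rfl⟩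
  rw [mem_wcl_iff, map_smul]
  exact map_mem_closure (continuous_const_smul t) (mem_wcl_iff.1 hf) hmaps

lemma forall_le_of_mem_wcl_convexHull {S : Set (X →L[ℝ] ℝ)} {x : X} {c : ℝ}
    (h : ∀ g ∈ S, g x ≤ c) : ∀ f ∈ wcl (convexHull ℝ S), f x ≤ c := by
  have hS : convexHull ℝ S ⊆ {g : X →L[ℝ] ℝ | g x ≤ c} :=
    convexHull_min h ((convex_Iic c).linear_preimage (ContinuousLinearMap.apply ℝ ℝ x).toLinearMap)
  intro f hf
  refine closure_minimal ?_ (isClosed_le (WeakDual.eval_continuous x) continuous_const) hf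
  rintro _ ⟨g, hg, rfl⟩
  exact hS hg

lemma exists_forall_le_one_lt_of_notMem_wcl {S : Set (X →L[ℝ] ℝ)} (hconv : Convex ℝ S)
    (h0 : (0 : X →L[ℝ] ℝ) ∈ S) {f : X →L[ℝ] ℝ} (hf : f ∉ wcl S) :
    ∃ x : X, (∀ g ∈ S, g x ≤ 1) ∧ 1 < f x := by
  obtain ⟨φ, hφS, hφf⟩ := exists_forall_le_one_lt_of_notMem
    (hconv.linear_image (toWeakDual : StrongDual ℝ X ≃ₗ[ℝ] WeakDual ℝ X).toLinearMap).closure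
    isClosed_closure (subset_closure ⟨0, h0, map_zero _⟩) hf
  obtain ⟨x, hx⟩ := WeakDual.exists_eq_eval φ
  exact ⟨x, fun g hg => hx _ ▸ hφS _ (subset_closure ⟨g, hg, rfl⟩), hx _ ▸ hφf⟩

end WeakStar

section Family

variable {X : Type*} [NormedAddCommGroup X] [NormedSpace ℝ X] {I : Type*}

def IsNormalAt (K : I → Set X) (η : ℝ) : Prop :=
  (⋂ i, (K i + η • closedBall (0 : X) 1)) ⊆ (⋂ i, K i) + closedBall (0 : X) 1

def polarHull (K : I → Set X) : Set (X →L[ℝ] ℝ) :=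
  wcl (convexHull ℝ (⋃ i, pol (K i)))

def IsDualNormalAt (K : I → Set X) (η : ℝ) : Prop :=
  invSum (closedBall (0 : X →L[ℝ] ℝ) 1) (polarHull K) ⊆
    wcl (convexHull ℝ (⋃ i, invSum (pol (K i))
      (if η = 0 then Set.univ else (1 / η) • closedBall (0 : X →L[ℝ] ℝ) 1)))

lemma zero_mem_polarHull [Nonempty I] (K : I → Set X) : (0 : X →L[ℝ] ℝ) ∈ polarHull K :=
  subset_wcl _ (subset_convexHull ℝ _ (mem_iUnion.2 ⟨Classical.arbitrary I, zero_mem_pol _⟩))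

lemma convex_polarHull (K : I → Set X) : Convex ℝ (polarHull K) :=
  convex_wcl (convex_convexHull ℝ _)

lemma smul_polarHull_subset {K : I → Set X} (hsmul : ∀ i, ∀ t : ℝ, 0 ≤ t → t • K i ⊆ K i)
    {t : ℝ} (ht : 0 ≤ t) : t • polarHull K ⊆ polarHull K := by
  refine smul_wcl_subset (smul_convexHull_subset (fun s hs => ?_) ht)
  rw [smul_set_iUnion]
  exact iUnion_mono fun i => pol_eq_dCone (hsmul i) ▸ smul_dCone_subset (K i) hs

lemma polarHull_subset_dCone_iInter {K : I → Set X}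
    (hsmul : ∀ i, ∀ t : ℝ, 0 ≤ t → t • K i ⊆ K i) : polarHull K ⊆ dCone (⋂ i, K i) := by
  refine fun f hf x hx => forall_le_of_mem_wcl_convexHull (fun g hg => ?_) f hf
  obtain ⟨i, hi⟩ := mem_iUnion.1 hg
  exact (pol_eq_dCone (hsmul i) ▸ hi) x (mem_iInter.1 hx i)

lemma dCone_iInter_subset_polarHull [Nonempty I] {K : I → Set X} (hconv : ∀ i, Convex ℝ (K i))
    (h0 : ∀ i, (0 : X) ∈ K i) (hcip : closure (⋂ i, K i) = ⋂ i, closure (K i)) :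
    dCone (⋂ i, K i) ⊆ polarHull K := by
  intro f hf
  by_contra hfW
  obtain ⟨z, hzS, hfz⟩ := exists_forall_le_one_lt_of_notMem_wcl (convex_convexHull ℝ _)
    (subset_convexHull ℝ _ (mem_iUnion.2 ⟨Classical.arbitrary I, zero_mem_pol _⟩)) hfW
  have hz : z ∈ closure (⋂ i, K i) := hcip ▸ mem_iInter.2 fun i =>
    mem_closure_of_forall_mem_pol (hconv i) (h0 i) fun g hg =>
      hzS g (subset_convexHull ℝ _ (mem_iUnion.2 ⟨i, hg⟩))
  have hfz' : f z ≤ 0 := closure_minimal hf (isClosed_le f.continuous continuous_const) hz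
  linarith

lemma invSum_closedBall_polarHull [Nonempty I] {K : I → Set X}
    (hsmul : ∀ i, ∀ t : ℝ, 0 ≤ t → t • K i ⊆ K i) :
    invSum (closedBall (0 : X →L[ℝ] ℝ) 1) (polarHull K) = closedBall 0 1 ∩ polarHull K := by
  have hs : ∀ t : ℝ, 0 ≤ t → t • polarHull K ⊆ polarHull K :=
    fun t ht => smul_polarHull_subset hsmul ht
  exact invSum_eq_inter_of_subset_recCone_right (convex_closedBall 0 1) (convex_polarHull K)
    (mem_closedBall_self zero_le_one) (zero_mem_polarHull K)
    (subset_recCone hs (add_subset_of_convex_of_smul_subset (convex_polarHull K) hs))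

lemma isNormalAt_zero (K : I → Set X) : IsNormalAt K 0 := by
  intro x hx
  simp_rw [zero_smul_set (nonempty_closedBall.2 zero_le_one), add_zero] at hx
  exact ⟨x, hx, 0, mem_closedBall_self zero_le_one, add_zero x⟩

lemma isDualNormalAt_zero [Nonempty I] {K : I → Set X}
    (hsmul : ∀ i, ∀ t : ℝ, 0 ≤ t → t • K i ⊆ K i) : IsDualNormalAt K 0 := by
  intro f hf
  rw [invSum_closedBall_polarHull hsmul] at hf
  rw [if_pos rfl]
  exact wcl_mono (convexHull_mono (iUnion_mono fun i => subset_invSum_univ _)) hf.2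

lemma isDualNormalAt_of_isNormalAt [Nonempty I] {K : I → Set X}
    (hsmul : ∀ i, ∀ t : ℝ, 0 ≤ t → t • K i ⊆ K i) (hconv : ∀ i, Convex ℝ (K i))
    (h0 : ∀ i, (0 : X) ∈ K i) {η η' : ℝ} (hη' : 0 < η') (hlt : η' < η) (hN : IsNormalAt K η) :
    IsDualNormalAt K η' := by
  intro f hf
  rw [invSum_closedBall_polarHull hsmul] at hf
  obtain ⟨hfB, hfW⟩ := hf
  rw [if_neg hη'.ne']
  simp_rw [invSum_pol_smul_closedBall (hsmul _) (one_div_nonneg.2 hη'.le)]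
  by_contra hfR
  obtain ⟨x, hxR, hfx⟩ := exists_forall_le_one_lt_of_notMem_wcl (convex_convexHull ℝ _)
    (subset_convexHull ℝ (⋃ i, dCone (K i) ∩ closedBall 0 (1 / η'))
      (mem_iUnion.2 ⟨Classical.arbitrary I, zero_mem_dCone _,
        mem_closedBall_self (one_div_nonneg.2 hη'.le)⟩)) hfR
  have hxK : ∀ i, x ∈ K i + η • closedBall (0 : X) 1 := by
    intro i
    rw [smul_unitClosedBall_of_nonneg (hη'.le.trans hlt.le)]
    refine mem_add_closedBall_of_forall_dCone (hsmul i) (hconv i) (h0 i) hη'.le hlt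
      fun g hg hgn => ?_
    have hg' : η'⁻¹ • g ∈ dCone (K i) ∩ closedBall 0 (1 / η') := by
      refine ⟨smul_dCone_subset _ (inv_nonneg.2 hη'.le) (smul_mem_smul_set hg), ?_⟩
      rw [mem_closedBall_zero_iff, norm_smul, Real.norm_of_nonneg (inv_nonneg.2 hη'.le), one_div]
      exact mul_le_of_le_one_right (inv_nonneg.2 hη'.le) hgn
    have := hxR _ (subset_convexHull ℝ _ (mem_iUnion.2 ⟨i, hg'⟩))
    rwa [smul_apply, smul_eq_mul, inv_mul_le_iff₀ hη', mul_one] at this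
  obtain ⟨k, hk, b, hb, rfl⟩ := hN (mem_iInter.2 hxK)
  have hfk : f k ≤ 0 := polarHull_subset_dCone_iInter hsmul hfW k hk
  have hfb : f b ≤ 1 := apply_le_of_mem_closedBall hfB hb
  rw [map_add] at hfx
  linarith

lemma isNormalAt_of_isDualNormalAt [Nonempty I] {K : I → Set X}
    (hsmul : ∀ i, ∀ t : ℝ, 0 ≤ t → t • K i ⊆ K i) (hconv : ∀ i, Convex ℝ (K i))
    (h0 : ∀ i, (0 : X) ∈ K i) (hcip : closure (⋂ i, K i) = ⋂ i, closure (K i)) {η η' : ℝ}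
    (hη' : 0 ≤ η') (hlt : η' < η) (hD : IsDualNormalAt K η) : IsNormalAt K η' := by
  have hη : 0 < η := hη'.trans_lt hlt
  rw [IsDualNormalAt, if_neg hη.ne', invSum_closedBall_polarHull hsmul] at hD
  simp_rw [invSum_pol_smul_closedBall (hsmul _) (one_div_nonneg.2 hη.le)] at hD
  have hsmul_iInter : ∀ t : ℝ, 0 ≤ t → t • (⋂ i, K i) ⊆ ⋂ i, K i := by
    rintro t ht _ ⟨y, hy, rfl⟩
    exact mem_iInter.2 fun i => hsmul i t ht (smul_mem_smul_set (mem_iInter.1 hy i))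
  intro x hx
  refine mem_add_closedBall_of_forall_dCone hsmul_iInter (convex_iInter hconv) (mem_iInter.2 h0)
    (div_nonneg hη' hη.le) ((div_lt_one hη).2 hlt) fun g hg hgn => ?_
  refine forall_le_of_mem_wcl_convexHull (fun h hh => ?_) g
    (hD ⟨mem_closedBall_zero_iff.2 hgn, dCone_iInter_subset_polarHull hconv h0 hcip hg⟩)
  obtain ⟨i, hhK, hhB⟩ := mem_iUnion.1 hh
  obtain ⟨k, hk, _, ⟨b, hb, rfl⟩, rfl⟩ := mem_iInter.1 hx i
  rw [map_add, map_smul, smul_eq_mul]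
  calc h k + η' * h b ≤ 0 + η' * (1 / η) :=
        add_le_add (hhK k hk) (mul_le_mul_of_nonneg_left (apply_le_of_mem_closedBall hhB hb) hη')
    _ = η' / η := by ring

end Family

theorem stmt14_general {X : Type*} [NormedAddCommGroup X] [NormedSpace ℝ X]
    {I : Type*} [Nonempty I] (K : I → Set X)
    (hcone_smul : ∀ i, ∀ t : ℝ, 0 ≤ t → t • K i ⊆ K i)
    (hcone_add : ∀ i, K i + K i ⊆ K i) (h0 : ∀ i, (0 : X) ∈ K i)
    (hcip : closure (⋂ i, K i) = ⋂ i, closure (K i)) :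
    sSup {η : ℝ | 0 ≤ η ∧
        (⋂ i, (K i + η • closedBall (0:X) 1)) ⊆ (⋂ i, K i) + closedBall (0:X) 1} =
      sSup {η : ℝ | 0 ≤ η ∧
        invSum (closedBall (0 : X →L[ℝ] ℝ) 1) (wcl (convexHull ℝ (⋃ i, pol (K i)))) ⊆
          wcl (convexHull ℝ (⋃ i, invSum (pol (K i))
            (if η = 0 then Set.univ else (1 / η) • closedBall (0 : X →L[ℝ] ℝ) 1)))} := by
  have hconv i : Convex ℝ (K i) := convex_of_smul_subset_of_add_subset (hcone_smul i) (hcone_add i)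
  refine sSup_eq_of_forall_Ico_subset ⟨le_rfl, isNormalAt_zero K⟩
    ⟨le_rfl, isDualNormalAt_zero hcone_smul⟩ ?_ ?_
  · rintro η ⟨-, hN⟩ η' ⟨hη', hlt⟩
    refine ⟨hη', ?_⟩
    rcases hη'.eq_or_lt with rfl | hpos
    · exact isDualNormalAt_zero hcone_smul
    · exact isDualNormalAt_of_isNormalAt hcone_smul hconv h0 hpos hlt hN
  · rintro η ⟨-, hD⟩ η' ⟨hη', hlt⟩
    exact ⟨hη', isNormalAt_of_isDualNormalAt hcone_smul hconv h0 hcip hη' hlt hD⟩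

theorem stmt14 {X : Type*} [NormedAddCommGroup X] [NormedSpace ℝ X] [CompleteSpace X]
    {I : Type*} [Nonempty I] (K : I → Set X)
    (hcone_smul : ∀ i, ∀ t : ℝ, 0 ≤ t → t • K i ⊆ K i)
    (hcone_add : ∀ i, K i + K i ⊆ K i) (h0 : ∀ i, (0 : X) ∈ K i)
    (hcip : closure (⋂ i, K i) = ⋂ i, closure (K i)) :
    sSup {η : ℝ | 0 ≤ η ∧
        (⋂ i, (K i + η • closedBall (0:X) 1)) ⊆ (⋂ i, K i) + closedBall (0:X) 1} =
      sSup {η : ℝ | 0 ≤ η ∧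
        invSum (closedBall (0 : X →L[ℝ] ℝ) 1) (wcl (convexHull ℝ (⋃ i, pol (K i)))) ⊆
          wcl (convexHull ℝ (⋃ i, invSum (pol (K i))
            (if η = 0 then Set.univ else (1 / η) • closedBall (0 : X →L[ℝ] ℝ) 1)))} :=
  stmt14_general K hcone_smul hcone_add h0 hcip
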